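/- In the load-profile setup, the concavity correction term satisfies 0 ≤ ∑_{k=0}^{K−1} ∑_{g=1}^{G} L*(k) (u_g(k)^γ − u_g(k)) ≤ (1 − γ) · ImbTot(L). -/
import Mathlib


open Finset

/-- Per-step maximum load `L*(k) = max_g L(k,g)`. -/
noncomputable def Lstar (K G : ℕ) [NeZero G] (L : Fin K → Fin G → ℝ) (k : Fin K) : ℝ :=
  Finset.univ.sup' ⟨0, Finset.mem_univ 0⟩ (L k)

/-- Utilization `u_g(k) = L(k,g) / L*(k)`. -/
noncomputable def uLoad (K G : ℕ) [NeZero G] (L : Fin K → Fin G → ℝ)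
    (k : Fin K) (g : Fin G) : ℝ :=
  L k g / Lstar K G L k

/-- Total energy
`E(L) = κ ∑_k L*(k) ∑_g (P_idle + (P_max − P_idle) u_g(k)^γ)` (real power `rpow`). -/
noncomputable def energy (K G : ℕ) [NeZero G] (κ Pidle Pmax γ : ℝ)
    (L : Fin K → Fin G → ℝ) : ℝ :=
  κ * ∑ k : Fin K, Lstar K G L k *
      ∑ g : Fin G, (Pidle + (Pmax - Pidle) * (uLoad K G L k g) ^ γ)

/-- Total workload `W(L) = ∑_k ∑_g L(k,g)`. -/
noncomputable def workTot (K G : ℕ) (L : Fin K → Fin G → ℝ) : ℝ :=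
  ∑ k : Fin K, ∑ g : Fin G, L k g

/-- Total imbalance `ImbTot(L) = ∑_k ∑_g (L*(k) − L(k,g))`. -/
noncomputable def imbTot (K G : ℕ) [NeZero G] (L : Fin K → Fin G → ℝ) : ℝ :=
  ∑ k : Fin K, ∑ g : Fin G, (Lstar K G L k - L k g)

/-- In the load-profile setup, the concavity correction term satisfies
`0 ≤ ∑_k ∑_g L*(k)(u_g(k)^γ − u_g(k)) ≤ (1 − γ)·ImbTot(L)`. -/
theorem concavity_correction_bounds (K G : ℕ) [NeZero K] [NeZero G]
    (L : Fin K → Fin G → ℝ) (hL : ∀ k g, 0 ≤ L k g)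
    (hLstar : ∀ k, 0 < Lstar K G L k)
    (κ Pidle Pmax γ : ℝ) (hκ : 0 < κ) (hPi : 0 ≤ Pidle) (hPm : Pidle ≤ Pmax)
    (hγ : γ ∈ Set.Ioo (0 : ℝ) 1) :
    0 ≤ ∑ k : Fin K, ∑ g : Fin G,
        Lstar K G L k * ((uLoad K G L k g) ^ γ - uLoad K G L k g) ∧
      ∑ k : Fin K, ∑ g : Fin G,
          Lstar K G L k * ((uLoad K G L k g) ^ γ - uLoad K G L k g) ≤
        (1 - γ) * imbTot K G L := by
  obtain ⟨hγ0, hγ1⟩ := hγ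
  have key : ∀ (k : Fin K) (g : Fin G),
      0 ≤ Lstar K G L k * ((uLoad K G L k g) ^ γ - uLoad K G L k g) ∧
      Lstar K G L k * ((uLoad K G L k g) ^ γ - uLoad K G L k g) ≤
        (1 - γ) * (Lstar K G L k - L k g) := by
    intro k g
    have hLk := hLstar k
    have hu0 : 0 ≤ uLoad K G L k g := div_nonneg (hL k g) hLk.le
    have hle : L k g ≤ Lstar K G L k := Finset.le_sup' (L k) (Finset.mem_univ g)
    have hu1 : uLoad K G L k g ≤ 1 := by
      rw [uLoad, div_le_one hLk]; exact hle
    set u := uLoad K G L k g with hu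
    have hlow : u ≤ u ^ γ := by
      rcases eq_or_lt_of_le hu0 with h0 | h0
      · simp [← h0, Real.zero_rpow hγ0.ne']
      · calc u = u ^ (1 : ℝ) := (Real.rpow_one u).symm
        _ ≤ u ^ γ := Real.rpow_le_rpow_of_exponent_ge h0 hu1 hγ1.le
    have hhigh : u ^ γ ≤ γ * u + (1 - γ) * 1 := by
      have := Real.geom_mean_le_arith_mean2_weighted (w₁ := γ) (w₂ := 1 - γ)
        (p₁ := u) (p₂ := 1) hγ0.le (by linarith) hu0 zero_le_one (by ring)
      simpa [Real.one_rpow] using this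
    have hLu : Lstar K G L k * u = L k g := by
      rw [hu, uLoad]; field_simp
    constructor
    · exact mul_nonneg hLk.le (by linarith)
    · have : Lstar K G L k * (u ^ γ - u) ≤ Lstar K G L k * ((1 - γ) * (1 - u)) := by
        apply mul_le_mul_of_nonneg_left _ hLk.le
        nlinarith
      calc Lstar K G L k * (u ^ γ - u) ≤ Lstar K G L k * ((1 - γ) * (1 - u)) := this
        _ = (1 - γ) * (Lstar K G L k - Lstar K G L k * u) := by ring
        _ = (1 - γ) * (Lstar K G L k - L k g) := by rw [hLu]
  constructor
  · exact Finset.sum_nonneg fun k _ => Finset.sum_nonneg fun g _ => (key k g).1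
  · rw [imbTot, Finset.mul_sum]
    refine Finset.sum_le_sum fun k _ => ?_
    rw [Finset.mul_sum]
    exact Finset.sum_le_sum fun g _ => (key k g).2
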